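/- In dimension $d=1$, for the step cost $\ell(r)=\tfrac{M}{2}\,\mathbf{1}_{[0,1)}(r)$ with $M>0$, the thermodynamic limit is $g_\ell(\lambda)=\sup_{n\in\mathbb{N}}\{\lambda n-\tfrac{M}{2}n(n-1)\}$, and hence the effective integrand $f_\ell=g_\ell^*$ equals, on each interval $[k,k+1]$ with $k\in\mathbb{N}$, the affine interpolation of $h(t)=\tfrac{M}{2}t(t-1)_+$ at integer points: $f_\ell(t)=h(k)+(t-k)(h(k+1)-h(k))$. -/

import Mathlib

open scoped ENNReal BigOperators Classical
open Filter MeasureTheory Set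

noncomputable section

/-- The interaction energy of a finite point configuration. -/
def xi {d : ℕ} (ℓ : ℝ → ℝ≥0∞) (S : Finset (EuclideanSpace ℝ (Fin d))) : ℝ≥0∞ :=
  ∑ x ∈ S, ∑ y ∈ S, if x ≠ y then ℓ (dist x y) else 0

/-- `Γ_ℓ(λ, B) = sup {λ #S - ξ_ℓ(S) : S ⊆ B finite}`. -/
def Gam {d : ℕ} (ℓ : ℝ → ℝ≥0∞) (lam : ℝ) (B : Set (EuclideanSpace ℝ (Fin d))) : ℝ :=
  sSup {x : ℝ | ∃ S : Finset (EuclideanSpace ℝ (Fin d)),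
    ↑S ⊆ B ∧ xi ℓ S ≠ ⊤ ∧ x = lam * S.card - (xi ℓ S).toReal}

/-- The half-open hypercube `Q_k = [-k/2, k/2)^d`. -/
def Qcube (d k : ℕ) : Set (EuclideanSpace ℝ (Fin d)) :=
  {x | ∀ i, -((k : ℝ)/2) ≤ x i ∧ x i < (k : ℝ)/2}

/-- The thermodynamic limit function `g_ℓ(λ) = inf_{k ≥ 1} Γ_ℓ(λ, Q_k)/k^d`. -/
def gl (d : ℕ) (ℓ : ℝ → ℝ≥0∞) (lam : ℝ) : ℝ :=
  ⨅ k : ℕ+, Gam ℓ lam (Qcube d k) / (k : ℝ) ^ d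

/-- The Epstein zeta function of the cubic lattice `ℤ^d`. -/
def LamZ (d : ℕ) (ℓ : ℝ → ℝ≥0∞) (r : ℝ) : ℝ≥0∞ :=
  ∑' z : {z : Fin d → ℤ // z ≠ 0},
    ℓ (r * ‖(WithLp.equiv 2 (Fin d → ℝ)).symm (fun i => (((z : Fin d → ℤ)) i : ℝ))‖)

/-- The step cost `ℓ(r) = (M/2) 1_{[0,1)}(r)`. -/
def stepCost (M : ℝ) (r : ℝ) : ℝ≥0∞ := if r < 1 then ENNReal.ofReal (M/2) else 0

/-- The real-valued Fenchel conjugate `f_ℓ = g_ℓ*` in dimension one. -/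
def flStep (M : ℝ) (t : ℝ) : ℝ :=
  sSup {x : ℝ | ∃ lam : ℝ, x = lam * t - gl 1 (stepCost M) lam}

/-- `h(t) = (M/2) t (t-1)₊`. -/
def hM (M : ℝ) (t : ℝ) : ℝ := M/2 * t * max (t - 1) 0

abbrev E1 := EuclideanSpace ℝ (Fin 1)

def emb (t : ℝ) : E1 := WithLp.toLp 2 (fun _ => t)

lemma emb_apply (t : ℝ) (i : Fin 1) : emb t i = t := rfl

lemma emb_inj : Function.Injective emb := fun a b h => congrArg (fun x : E1 => x 0) h

lemma dist_E1 (x y : E1) : dist x y = |x 0 - y 0| := by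
  rw [EuclideanSpace.dist_eq]
  rw [Fin.sum_univ_one, Real.sqrt_sq_eq_abs, Real.dist_eq, abs_abs]

lemma mem_Qcube_iff (k : ℕ) (x : E1) :
    x ∈ Qcube 1 k ↔ -((k : ℝ)/2) ≤ x 0 ∧ x 0 < (k : ℝ)/2 := by
  constructor
  · intro h; exact h 0
  · intro h i; have : i = 0 := Subsingleton.elim _ _; rw [this]; exact h

lemma stepCost_ne_top (M r : ℝ) : stepCost M r ≠ ⊤ := by
  unfold stepCost; split <;> simp

lemma xi_ne_top (M : ℝ) (S : Finset E1) : xi (stepCost M) S ≠ ⊤ := by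
  unfold xi
  refine (ENNReal.sum_lt_top.2 fun x _ => (ENNReal.sum_lt_top.2 fun y _ => ?_)).ne
  split
  · exact (stepCost_ne_top M _).lt_top
  · exact ENNReal.zero_lt_top

lemma toReal_xi (M : ℝ) (hM0 : 0 < M) (S : Finset E1) :
    (xi (stepCost M) S).toReal
      = ∑ x ∈ S, ∑ y ∈ S, (if x ≠ y ∧ dist x y < 1 then M/2 else 0) := by
  unfold xi
  rw [ENNReal.toReal_sum (fun a _ => (ENNReal.sum_lt_top.2 fun y _ => ?fin).ne)]
  case fin =>
    split
    · exact (stepCost_ne_top M _).lt_top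
    · exact ENNReal.zero_lt_top
  refine Finset.sum_congr rfl fun x _ => ?_
  rw [ENNReal.toReal_sum (fun y _ => ?fin2)]
  case fin2 =>
    split
    · exact stepCost_ne_top M _
    · simp
  refine Finset.sum_congr rfl fun y _ => ?_
  unfold stepCost
  by_cases h1 : x ≠ y <;> by_cases h2 : dist x y < 1 <;>
    simp [h1, h2, ENNReal.toReal_ofReal (by linarith : (0:ℝ) ≤ M/2)]

-- term function and its sup
def trm (M lam : ℝ) (n : ℕ) : ℝ := lam * n - M/2 * (n * (n - 1))

def Tset (M lam : ℝ) : Set ℝ := {x : ℝ | ∃ n : ℕ, x = lam * n - M/2 * (n * (n - 1))}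

lemma Tset_nonempty (M lam : ℝ) : (Tset M lam).Nonempty := ⟨_, 0, rfl⟩

lemma trm_le_bound (M lam : ℝ) (hM0 : 0 < M) (n : ℕ) :
    lam * n - M/2 * (n * (n - 1)) ≤ (lam + M/2)^2 / (2*M) := by
  rw [le_div_iff₀ (by positivity : (0:ℝ) < 2*M)]
  nlinarith [sq_nonneg (lam + M/2 - M*n)]

lemma Tset_bddAbove (M lam : ℝ) (hM0 : 0 < M) : BddAbove (Tset M lam) := by
  refine ⟨(lam + M/2)^2 / (2*M), fun x hx => ?_⟩
  obtain ⟨n, rfl⟩ := hx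
  exact trm_le_bound M lam hM0 n

def Gfun (M lam : ℝ) : ℝ := sSup (Tset M lam)

lemma trm_le_G (M lam : ℝ) (hM0 : 0 < M) (n : ℕ) :
    lam * n - M/2 * (n * (n - 1)) ≤ Gfun M lam :=
  le_csSup (Tset_bddAbove M lam hM0) ⟨n, rfl⟩

lemma G_nonneg (M lam : ℝ) (hM0 : 0 < M) : 0 ≤ Gfun M lam := by
  have := trm_le_G M lam hM0 0
  simpa using this

-- the key quadratic inequality for lambda* = M*k
lemma trm_le_at_Mk (M : ℝ) (hM0 : 0 < M) (k n : ℕ) :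
    (M * k) * n - M/2 * (n * (n - 1)) ≤ (M * k) * k - M/2 * (k * (k - 1)) := by
  rcases le_or_gt n k with h | h
  · have h' : (n:ℝ) ≤ k := Nat.cast_le.2 h
    nlinarith [mul_nonneg (sub_nonneg.2 h') (by linarith : (0:ℝ) ≤ (k:ℝ) + 1 - n)]
  · have h' : (k:ℝ) + 1 ≤ n := by exact_mod_cast Nat.succ_le_of_lt h
    nlinarith [mul_nonneg (by linarith : (0:ℝ) ≤ (n:ℝ) - k) (by linarith : (0:ℝ) ≤ (n:ℝ) - k - 1)]

lemma G_at_Mk (M : ℝ) (hM0 : 0 < M) (k : ℕ) :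
    Gfun M (M * k) = (M * k) * k - M/2 * (k * (k - 1)) := by
  refine le_antisymm (csSup_le (Tset_nonempty _ _) ?_) (trm_le_G M _ hM0 k)
  rintro x ⟨n, rfl⟩
  exact trm_le_at_Mk M hM0 k n

lemma floor_eq_abs_lt_one {a b : ℝ} (h : ⌊a⌋ = ⌊b⌋) : |a - b| < 1 := by
  have h1 := Int.floor_le a
  have h2 := Int.lt_floor_add_one a
  have h3 := Int.floor_le b
  have h4 := Int.lt_floor_add_one b
  rw [abs_sub_lt_iff]
  constructor <;> [skip; skip] <;> rw [h] at * <;> push_cast at * <;> linarith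

lemma value_le (M lam : ℝ) (hM0 : 0 < M) (k : ℕ) (S : Finset E1)
    (hS : ↑S ⊆ Qcube 1 k) :
    lam * S.card - (xi (stepCost M) S).toReal ≤ k * Gfun M lam := by
  classical
  set g : E1 → ℕ := fun x => (⌊x 0 + (k:ℝ)/2⌋).toNat with hg
  have hmaps : ∀ x ∈ S, g x ∈ Finset.range k := by
    intro x hx
    have hq := (mem_Qcube_iff k x).1 (hS hx)
    have h0 : (0:ℝ) ≤ x 0 + (k:ℝ)/2 := by linarith [hq.1]
    have h1 : x 0 + (k:ℝ)/2 < (k:ℝ) := by linarith [hq.2]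
    have hf0 : 0 ≤ ⌊x 0 + (k:ℝ)/2⌋ := Int.floor_nonneg.2 h0
    have hfk : ⌊x 0 + (k:ℝ)/2⌋ < (k:ℤ) := by
      rw [Int.floor_lt]; exact_mod_cast h1
    rw [Finset.mem_range]
    have hgx : g x = (⌊x 0 + (k:ℝ)/2⌋).toNat := rfl
    rw [hgx]
    omega
  have hfloor : ∀ x ∈ S, ∀ y ∈ S, g x = g y → dist x y < 1 := by
    intro x hx y hy hxy
    have hqx := (mem_Qcube_iff k x).1 (hS hx)
    have hqy := (mem_Qcube_iff k y).1 (hS hy)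
    have h0x : 0 ≤ ⌊x 0 + (k:ℝ)/2⌋ := Int.floor_nonneg.2 (by linarith [hqx.1])
    have h0y : 0 ≤ ⌊y 0 + (k:ℝ)/2⌋ := Int.floor_nonneg.2 (by linarith [hqy.1])
    have : ⌊x 0 + (k:ℝ)/2⌋ = ⌊y 0 + (k:ℝ)/2⌋ := by
      have hgx : g x = (⌊x 0 + (k:ℝ)/2⌋).toNat := rfl
      have hgy : g y = (⌊y 0 + (k:ℝ)/2⌋).toNat := rfl
      rw [hgx, hgy] at hxy
      omega
    have := floor_eq_abs_lt_one this
    rw [dist_E1]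
    calc |x 0 - y 0| = |(x 0 + (k:ℝ)/2) - (y 0 + (k:ℝ)/2)| := by ring_nf
    _ < 1 := this
  -- card splits fiberwise
  have hcard : (S.card : ℝ) = ∑ j ∈ Finset.range k, ((S.filter (fun a => g a = j)).card : ℝ) := by
    rw [Finset.card_eq_sum_card_fiberwise hmaps]; push_cast; ring
  -- lower bound for each x: the fiber of x contributes
  have hinner : ∀ x ∈ S,
      M/2 * (((S.filter (fun a => g a = g x)).card : ℝ) - 1)
        ≤ ∑ y ∈ S, (if x ≠ y ∧ dist x y < 1 then M/2 else 0) := by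
    intro x hx
    set T := S.filter (fun a => g a = g x) with hT
    have hxT : x ∈ T := Finset.mem_filter.2 ⟨hx, rfl⟩
    have hsub : T ⊆ S := Finset.filter_subset _ _
    have step1 : ∑ y ∈ T, (if x ≠ y ∧ dist x y < 1 then M/2 else 0)
        ≤ ∑ y ∈ S, (if x ≠ y ∧ dist x y < 1 then M/2 else 0) := by
      refine Finset.sum_le_sum_of_subset_of_nonneg hsub fun y _ _ => ?_
      split
      · linarith
      · exact le_rfl
    have step2 : ∑ y ∈ T, (if x ≠ y ∧ dist x y < 1 then M/2 else 0)
        = M/2 * ((T.card : ℝ) - 1) := by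
      have hrw : ∀ y ∈ T.erase x, (if x ≠ y ∧ dist x y < 1 then M/2 else 0) = M/2 := by
        intro y hy
        have hyT := Finset.mem_of_mem_erase hy
        have hne : x ≠ y := (Finset.ne_of_mem_erase hy).symm
        have : dist x y < 1 :=
          hfloor x hx y (hsub hyT) ((Finset.mem_filter.1 hyT).2).symm
        simp [hne, this]
      have h0 : (if x ≠ x ∧ dist x x < 1 then M/2 else 0) = 0 := by
        simp
      have hc : (T.erase x).card = T.card - 1 := Finset.card_erase_of_mem hxT
      have hc1 : 1 ≤ T.card := Finset.card_pos.2 ⟨x, hxT⟩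
      rw [← Finset.sum_erase_add T _ hxT, h0, add_zero,
        Finset.sum_congr rfl hrw, Finset.sum_const, nsmul_eq_mul, hc,
        Nat.cast_sub hc1]
      push_cast
      ring
    linarith [step1, step2.symm.le]
  -- xi lower bound
  have hxi : ∑ j ∈ Finset.range k,
      M/2 * (((S.filter (fun a => g a = j)).card : ℝ) * (((S.filter (fun a => g a = j)).card : ℝ) - 1))
      ≤ (xi (stepCost M) S).toReal := by
    rw [toReal_xi M hM0]
    have := Finset.sum_fiberwise_of_maps_to hmaps
      (fun x => M/2 * (((S.filter (fun a => g a = g x)).card : ℝ) - 1))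
    calc ∑ j ∈ Finset.range k,
        M/2 * (((S.filter (fun a => g a = j)).card : ℝ) * (((S.filter (fun a => g a = j)).card : ℝ) - 1))
        = ∑ j ∈ Finset.range k, ∑ x ∈ S.filter (fun a => g a = j),
            M/2 * (((S.filter (fun a => g a = g x)).card : ℝ) - 1) := by
          refine Finset.sum_congr rfl fun j _ => ?_
          have hrw2 : ∀ x ∈ S.filter (fun a => g a = j),
              M/2 * (((S.filter (fun a => g a = g x)).card : ℝ) - 1)
                = M/2 * (((S.filter (fun a => g a = j)).card : ℝ) - 1) := by
            intro x hxj
            rw [(Finset.mem_filter.1 hxj).2]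
          rw [Finset.sum_congr rfl hrw2, Finset.sum_const, nsmul_eq_mul]
          ring
      _ = ∑ x ∈ S, M/2 * (((S.filter (fun a => g a = g x)).card : ℝ) - 1) := this
      _ ≤ ∑ x ∈ S, ∑ y ∈ S, (if x ≠ y ∧ dist x y < 1 then M/2 else 0) :=
          Finset.sum_le_sum hinner
  -- combine
  have hG : ∀ j ∈ Finset.range k,
      lam * ((S.filter (fun a => g a = j)).card : ℝ)
        - M/2 * (((S.filter (fun a => g a = j)).card : ℝ) * (((S.filter (fun a => g a = j)).card : ℝ) - 1))
        ≤ Gfun M lam := fun j _ => trm_le_G M lam hM0 _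
  have hsumG := Finset.sum_le_sum hG
  rw [Finset.sum_const, Finset.card_range, nsmul_eq_mul] at hsumG
  rw [hcard, Finset.mul_sum]
  rw [Finset.sum_sub_distrib] at hsumG
  linarith [hxi]

lemma exists_config (M lam : ℝ) (hM0 : 0 < M) (k n : ℕ) (hk : 0 < k) :
    ∃ S : Finset E1, ↑S ⊆ Qcube 1 k ∧ (S.card : ℝ) = k * n ∧
      (xi (stepCost M) S).toReal ≤ (k : ℝ) * (M/2 * (n * ((n:ℝ) - 1))) := by
  classical
  have hK1 : (1:ℝ) ≤ (k:ℝ) := by exact_mod_cast hk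
  have hN0 : (0:ℝ) ≤ (n:ℝ) := Nat.cast_nonneg n
  set ε : ℝ := 1 / (2 * (k:ℝ) * ((n:ℝ) + 1)) with hε
  have hεpos : 0 < ε := by positivity
  have hεid : ε * (2 * (k:ℝ) * ((n:ℝ) + 1)) = 1 := by
    rw [hε]; field_simp
  set p : ℕ × ℕ → ℝ := fun q => -((k:ℝ)/2) + q.1 * (1 + (n:ℝ) * ε) + q.2 * ε with hp
  set I : Finset (ℕ × ℕ) := Finset.range k ×ˢ Finset.range n with hI
  -- basic coordinate bounds
  have hcoord : ∀ q ∈ I, -((k:ℝ)/2) ≤ p q ∧ p q < (k:ℝ)/2 := by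
    rintro ⟨j, i⟩ hq
    obtain ⟨hj, hi⟩ := Finset.mem_product.1 hq
    rw [Finset.mem_range] at hj hi
    have hj' : (j : ℝ) + 1 ≤ (k:ℝ) := by exact_mod_cast Nat.succ_le_of_lt hj
    have hi' : (i : ℝ) + 1 ≤ (n:ℝ) := by exact_mod_cast Nat.succ_le_of_lt hi
    have hj0 : (0:ℝ) ≤ j := Nat.cast_nonneg j
    have hi0 : (0:ℝ) ≤ i := Nat.cast_nonneg i
    constructor
    · have : (0:ℝ) ≤ (j:ℝ) * (1 + (n:ℝ) * ε) + i * ε := by positivity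
      simp only [hp]; linarith
    · simp only [hp]
      nlinarith [mul_le_mul_of_nonneg_right (by linarith : (j:ℝ) ≤ (k:ℝ) - 1)
        (by positivity : (0:ℝ) ≤ 1 + (n:ℝ) * ε),
        mul_le_mul_of_nonneg_right (by linarith : (i:ℝ) ≤ (n:ℝ) - 1) hεpos.le]
  -- different clusters: distance ≥ 1 + ε
  have hdiffc : ∀ j i j' i', i < n → i' < n → j ≠ j' →
      1 + ε ≤ |p (j, i) - p (j', i')| := by
    intro j i j' i' hi hi' hjj
    have hi2 : (i : ℝ) + 1 ≤ (n:ℝ) := by exact_mod_cast Nat.succ_le_of_lt hi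
    have hi2' : (i' : ℝ) + 1 ≤ (n:ℝ) := by exact_mod_cast Nat.succ_le_of_lt hi'
    have hi0 : (0:ℝ) ≤ i := Nat.cast_nonneg i
    have hi0' : (0:ℝ) ≤ i' := Nat.cast_nonneg i'
    have hdiff : p (j, i) - p (j', i')
        = ((j:ℝ) - j') * (1 + (n:ℝ) * ε) + ((i:ℝ) - i') * ε := by simp only [hp]; ring
    rcases lt_or_gt_of_ne hjj with h | h
    · have h1 : (j:ℝ) + 1 ≤ j' := by exact_mod_cast Nat.succ_le_of_lt h
      rw [← abs_neg, hdiff]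
      refine le_trans ?_ (le_abs_self _)
      nlinarith [mul_le_mul_of_nonneg_right (by linarith : (1:ℝ) ≤ (j':ℝ) - j)
        (by positivity : (0:ℝ) ≤ 1 + (n:ℝ) * ε)]
    · have h1 : (j':ℝ) + 1 ≤ j := by exact_mod_cast Nat.succ_le_of_lt h
      rw [hdiff]
      refine le_trans ?_ (le_abs_self _)
      nlinarith [mul_le_mul_of_nonneg_right (by linarith : (1:ℝ) ≤ (j:ℝ) - j')
        (by positivity : (0:ℝ) ≤ 1 + (n:ℝ) * ε)]
  -- injectivity
  have hinj : Set.InjOn (fun q => emb (p q)) I := by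
    rintro ⟨j, i⟩ hq ⟨j', i'⟩ hq' he
    obtain ⟨hj, hi⟩ := Finset.mem_product.1 hq
    obtain ⟨hj', hi'⟩ := Finset.mem_product.1 hq'
    rw [Finset.mem_range] at hj hi hj' hi'
    have hpe : p (j, i) = p (j', i') := emb_inj he
    by_cases hjj : j = j'
    · subst hjj
      have h1 : ((i:ℝ) - i') * ε = 0 := by
        have h2 := hpe; simp only [hp] at h2; linarith [h2]
      have h3 : (i:ℝ) = i' := by
        rcases mul_eq_zero.1 h1 with h | h
        · linarith
        · exact absurd h hεpos.ne'
      have : i = i' := by exact_mod_cast h3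
      simp [this]
    · exfalso
      have := hdiffc j i j' i' hi hi' hjj
      rw [hpe, sub_self, abs_zero] at this
      linarith
  refine ⟨I.image (fun q => emb (p q)), ?_, ?_, ?_⟩
  · intro x hx
    simp only [Finset.coe_image, Set.mem_image, Finset.mem_coe] at hx
    obtain ⟨q, hq, rfl⟩ := hx
    rw [mem_Qcube_iff]
    exact hcoord q hq
  · rw [Finset.card_image_of_injOn hinj, hI, Finset.card_product,
      Finset.card_range, Finset.card_range]
    push_cast; ring
  · -- xi bound
    rw [toReal_xi M hM0]
    set S := I.image (fun q => emb (p q)) with hSdef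
    have hScard : (S.card : ℝ) = (k:ℝ) * n := by
      rw [hSdef, Finset.card_image_of_injOn hinj, hI, Finset.card_product,
        Finset.card_range, Finset.card_range]
      push_cast; ring
    have hinner : ∀ x ∈ S, ∑ y ∈ S, (if x ≠ y ∧ dist x y < 1 then M/2 else 0)
        ≤ M/2 * ((n:ℝ) - 1) := by
      intro x hx
      simp only [hSdef, Finset.mem_image] at hx
      obtain ⟨⟨j, i⟩, hq, rfl⟩ := hx
      obtain ⟨hj, hi⟩ := Finset.mem_product.1 hq
      rw [Finset.mem_range] at hj hi
      set C : Finset E1 := (Finset.range n).image (fun i' => emb (p (j, i'))) with hC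
      have hxC : emb (p (j, i)) ∈ C :=
        Finset.mem_image.2 ⟨i, Finset.mem_range.2 hi, rfl⟩
      have hstep : ∀ y ∈ S, (if emb (p (j,i)) ≠ y ∧ dist (emb (p (j,i))) y < 1 then M/2 else 0)
          ≤ (if y ∈ C.erase (emb (p (j,i))) then M/2 else 0) := by
        intro y hy
        split
        case isTrue hcond =>
          obtain ⟨hne, hlt⟩ := hcond
          simp only [hSdef, Finset.mem_image] at hy
          obtain ⟨⟨j', i'⟩, hq', rfl⟩ := hy
          obtain ⟨hj', hi'⟩ := Finset.mem_product.1 hq'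
          rw [Finset.mem_range] at hj' hi'
          have hd : dist (emb (p (j,i))) (emb (p (j',i'))) = |p (j,i) - p (j',i')| := by
            rw [dist_E1]; rfl
          by_cases hjj : j = j'
          · subst hjj
            rw [if_pos (Finset.mem_erase.2 ⟨hne.symm,
              Finset.mem_image.2 ⟨i', Finset.mem_range.2 hi', rfl⟩⟩)]
          · exfalso
            have := hdiffc j i j' i' hi hi' hjj
            rw [hd] at hlt
            linarith
        case isFalse => split <;> linarith
      have hCcard : (C.erase (emb (p (j,i)))).card ≤ n - 1 := by
        have h1 : C.card ≤ n := le_trans (Finset.card_image_le) (by rw [Finset.card_range])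
        have := Finset.card_erase_of_mem hxC
        omega
      have hn1 : 1 ≤ n := by omega
      calc ∑ y ∈ S, (if emb (p (j,i)) ≠ y ∧ dist (emb (p (j,i))) y < 1 then M/2 else 0)
          ≤ ∑ y ∈ S, (if y ∈ C.erase (emb (p (j,i))) then M/2 else 0) :=
            Finset.sum_le_sum hstep
        _ = ∑ y ∈ S ∩ C.erase (emb (p (j,i))), M/2 := by
            rw [Finset.sum_ite_mem]
        _ = (S ∩ C.erase (emb (p (j,i)))).card * (M/2) := by
            rw [Finset.sum_const, nsmul_eq_mul]
        _ ≤ ((n:ℝ) - 1) * (M/2) := by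
            have hle : (S ∩ C.erase (emb (p (j,i)))).card ≤ n - 1 :=
              le_trans (Finset.card_le_card (Finset.inter_subset_right)) hCcard
            have h2 : ((S ∩ C.erase (emb (p (j,i)))).card : ℝ) ≤ ((n:ℝ) - 1) := by
              have h3 := (Nat.cast_le (α := ℝ)).2 hle
              rw [Nat.cast_sub hn1] at h3
              exact_mod_cast h3
            exact mul_le_mul_of_nonneg_right h2 (by linarith)
        _ = M/2 * ((n:ℝ) - 1) := by ring
    calc ∑ x ∈ S, ∑ y ∈ S, (if x ≠ y ∧ dist x y < 1 then M/2 else 0)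
        ≤ ∑ _x ∈ S, M/2 * ((n:ℝ) - 1) := Finset.sum_le_sum hinner
      _ = S.card * (M/2 * ((n:ℝ) - 1)) := by rw [Finset.sum_const, nsmul_eq_mul]
      _ = (k:ℝ) * (M/2 * ((n:ℝ) * ((n:ℝ) - 1))) := by rw [hScard]; ring

lemma xi_empty (M : ℝ) : xi (stepCost M) (∅ : Finset E1) = 0 := by
  simp [xi]

lemma GamSet_nonempty (M lam : ℝ) (k : ℕ) :
    {x : ℝ | ∃ S : Finset E1, ↑S ⊆ Qcube 1 k ∧ xi (stepCost M) S ≠ ⊤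
      ∧ x = lam * S.card - (xi (stepCost M) S).toReal}.Nonempty := by
  refine ⟨0, ∅, by simp, by rw [xi_empty]; simp, ?_⟩
  rw [xi_empty]; simp

lemma GamSet_bddAbove (M lam : ℝ) (hM0 : 0 < M) (k : ℕ) :
    BddAbove {x : ℝ | ∃ S : Finset E1, ↑S ⊆ Qcube 1 k ∧ xi (stepCost M) S ≠ ⊤
      ∧ x = lam * S.card - (xi (stepCost M) S).toReal} := by
  refine ⟨(k:ℝ) * Gfun M lam, fun x hx => ?_⟩
  obtain ⟨S, hS, _, rfl⟩ := hx
  exact value_le M lam hM0 k S hS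

lemma Gam_eq (M lam : ℝ) (hM0 : 0 < M) (k : ℕ) (hk : 0 < k) :
    Gam (stepCost M) lam (Qcube 1 k) = (k:ℝ) * Gfun M lam := by
  have hkpos : (0:ℝ) < (k:ℝ) := by exact_mod_cast hk
  refine le_antisymm (csSup_le (GamSet_nonempty M lam k) ?_) ?_
  · rintro x ⟨S, hS, _, rfl⟩
    exact value_le M lam hM0 k S hS
  · have hle : Gfun M lam ≤ Gam (stepCost M) lam (Qcube 1 k) / (k:ℝ) := by
      refine csSup_le (Tset_nonempty M lam) ?_
      rintro x ⟨n, rfl⟩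
      rw [le_div_iff₀ hkpos]
      obtain ⟨S, hS, hcard, hxi⟩ := exists_config M lam hM0 k n hk
      have hmem : lam * S.card - (xi (stepCost M) S).toReal ∈
          {x : ℝ | ∃ S : Finset E1, ↑S ⊆ Qcube 1 k ∧ xi (stepCost M) S ≠ ⊤
            ∧ x = lam * S.card - (xi (stepCost M) S).toReal} :=
        ⟨S, hS, xi_ne_top M S, rfl⟩
      have h1 := le_csSup (GamSet_bddAbove M lam hM0 k) hmem
      have h2 : (lam * n - M/2 * (n * ((n:ℝ) - 1))) * k
          ≤ lam * S.card - (xi (stepCost M) S).toReal := by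
        rw [hcard]
        nlinarith [hxi]
      exact le_trans h2 h1
    have := (le_div_iff₀ hkpos).1 hle
    linarith

lemma gl_eq_Gfun (M : ℝ) (hM0 : 0 < M) (lam : ℝ) :
    gl 1 (stepCost M) lam = Gfun M lam := by
  unfold gl
  have h : ∀ k : ℕ+, Gam (stepCost M) lam (Qcube 1 (k:ℕ)) / ((k:ℕ):ℝ) ^ 1 = Gfun M lam := by
    intro k
    rw [pow_one, Gam_eq M lam hM0 (k:ℕ) k.2, mul_comm, mul_div_assoc, div_self, mul_one]
    exact_mod_cast k.2.ne'
  simp only [h]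
  exact ciInf_const

lemma hM_nat (M : ℝ) (k : ℕ) :
    (M/2 * (k:ℝ) * max ((k:ℝ) - 1) 0) = M/2 * ((k:ℝ) * ((k:ℝ) - 1)) := by
  cases k with
  | zero => simp
  | succ m =>
    rw [max_eq_left (by push_cast; linarith [Nat.cast_nonneg (α := ℝ) m] : (0:ℝ) ≤ ((m+1:ℕ):ℝ) - 1)]
    ring

lemma hM_nat1 (M : ℝ) (k : ℕ) :
    (M/2 * ((k:ℝ)+1) * max (((k:ℝ)+1) - 1) 0) = M/2 * (((k:ℝ)+1) * (k:ℝ)) := by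
  rw [show ((k:ℝ)+1) - 1 = (k:ℝ) by ring, max_eq_left (Nat.cast_nonneg k)]
  ring

/-- In dimension `d = 1`, for the step cost `ℓ = (M/2) 1_{[0,1)}` with `M > 0`:
the thermodynamic limit is `g_ℓ(λ) = sup_{n ∈ ℕ} {λ n - (M/2) n(n-1)}`, and the
effective integrand `f_ℓ = g_ℓ*` is, on each interval `[k, k+1]`, the affine
interpolation of `h(t) = (M/2) t (t-1)₊` at the integer points. -/
theorem step_cost_gl_and_fl (M : ℝ) (hM0 : 0 < M) :
    (∀ lam : ℝ, gl 1 (stepCost M) lam =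
      sSup {x : ℝ | ∃ n : ℕ, x = lam * n - M/2 * (n * (n - 1))}) ∧
    (∀ k : ℕ, ∀ t ∈ Set.Icc (k : ℝ) ((k : ℝ) + 1),
      flStep M t = hM M k + (t - k) * (hM M (k + 1) - hM M k)) := by
  have hgl : ∀ lam : ℝ, gl 1 (stepCost M) lam = Gfun M lam := gl_eq_Gfun M hM0
  constructor
  · intro lam
    rw [hgl lam]
    rfl
  · intro k t ht
    have e1 : hM M (k:ℝ) = M/2 * ((k:ℝ) * ((k:ℝ) - 1)) := hM_nat M k
    have e2 : hM M ((k:ℝ)+1) = M/2 * (((k:ℝ)+1) * (k:ℝ)) := hM_nat1 M k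
    have hub : ∀ x ∈ {x : ℝ | ∃ lam : ℝ, x = lam * t - gl 1 (stepCost M) lam},
        x ≤ hM M (k:ℝ) + (t - (k:ℝ)) * (hM M ((k:ℝ)+1) - hM M (k:ℝ)) := by
      rintro x ⟨lam, rfl⟩
      rw [hgl lam]
      have A := trm_le_G M lam hM0 k
      have B := trm_le_G M lam hM0 (k+1)
      push_cast at B
      have A' := mul_le_mul_of_nonneg_left A (by linarith [ht.2] : (0:ℝ) ≤ (k:ℝ)+1 - t)
      have B' := mul_le_mul_of_nonneg_left B (by linarith [ht.1] : (0:ℝ) ≤ t - (k:ℝ))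
      rw [e1, e2]
      nlinarith [A', B']
    have hbdd : BddAbove {x : ℝ | ∃ lam : ℝ, x = lam * t - gl 1 (stepCost M) lam} :=
      ⟨_, hub⟩
    have hne : ({x : ℝ | ∃ lam : ℝ, x = lam * t - gl 1 (stepCost M) lam}).Nonempty :=
      ⟨_, M*(k:ℝ), rfl⟩
    have hmem : (M*(k:ℝ))*t - gl 1 (stepCost M) (M*(k:ℝ)) ∈
        {x : ℝ | ∃ lam : ℝ, x = lam * t - gl 1 (stepCost M) lam} := ⟨_, rfl⟩
    have hval : (M*(k:ℝ))*t - gl 1 (stepCost M) (M*(k:ℝ))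
        = hM M (k:ℝ) + (t - (k:ℝ)) * (hM M ((k:ℝ)+1) - hM M (k:ℝ)) := by
      rw [hgl, G_at_Mk M hM0 k, e1, e2]; ring
    unfold flStep
    refine le_antisymm (csSup_le hne hub) ?_
    rw [← hval]
    exact le_csSup hbdd hmem
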